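/- No-go theorem with momentum drift (Theorem 1 of the paper including the bounded unitary drift term): Let N, K ∈ ℕ with K ≥ 1, ℏ > 0, κ_k ∈ ℝ^N and f_k : ℝ^N → ℂ measurable for k = 1,…,K, and let f₀ : ℝ^N → ℝ be measurable. Let φ ∈ L²(ℝ^N, ℂ) with φ(p) ≠ 0 for almost every p. Suppose: (i) Σ_{k=1}^K |f_k(p + ℏκ_k)·φ(p + ℏκ_k)|² = (Σ_{k=1}^K |f_k(p)|²)·|φ(p)|² for almost every p, and (ii) Σ_{k=1}^K f_k(p + ℏκ_k)·φ(p + ℏκ_k)·conj( f_k(p' + ℏκ_k)·φ(p' + ℏκ_k) ) − i·( f₀(p) − f₀(p') )·φ(p)·conj(φ(p')) = (1/2)·Σ_{k=1}^K ( |f_k(p)|² + |f_k(p')|² )·φ(p)·conj(φ(p')) for almost every (p, p') ∈ ℝ^N × ℝ^N. Then f₀ is almost everywhere equal to a constant, and for every k there exists c_k ∈ ℂ with f_k = c_k almost everywhere and (c_k ≠ 0 → κ_k = 0); hence the dissipator and the drift generator −i[f₀(p̂), ·] both act trivially. -/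

import Mathlib

open MeasureTheory Filter Topology ComplexConjugate
open scoped RealInnerProductSpace FourierTransform Real

/-!
Dividing the kernel identity by `φ(p) conj φ(p')` and using the diagonal identity, the vectors
`u(p)_k = f_k(p + ℏκ_k) φ(p + ℏκ_k) / φ(p)` satisfy `2 Re⟨u(p), u(p')⟩ = ‖u(p)‖² + ‖u(p')‖²`,
so `u(p) = u(p')`, and then the imaginary part gives `f₀(p) = f₀(p')`: both are a.e. constant.
With `u ≡ a`, the function `|φ|²` is a fixed point of convolution with `Σ_k |a_k|² δ_{ℏκ_k}`
(up to the factor `Σ_k |a_k|²`). On the Fourier side this gives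
`Σ_k |a_k|² e^{-2πi⟨ℏκ_k, ξ⟩} = Σ_k |a_k|²` wherever `𝓕|φ|²` is nonzero, hence near `ξ = 0`,
so `cos (2π⟨ℏκ_k, ξ⟩) = 1` near `0` whenever `a_k ≠ 0`, which forces `κ_k = 0`.
-/

section KernelAlgebra

variable {ι : Type*} [Fintype ι]

theorem eq_of_two_mul_re_sum_mul_conj_eq {u w : ι → ℂ}
    (h : 2 * (∑ k, u k * conj (w k)).re = ∑ k, ‖u k‖ ^ 2 + ∑ k, ‖w k‖ ^ 2) : u = w := by
  have hsum : ∑ k, ‖u k - w k‖ ^ 2 = 0 := by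
    simp only [Complex.sq_norm, Complex.normSq_sub, Finset.sum_sub_distrib,
      Finset.sum_add_distrib, ← Finset.mul_sum, ← Complex.re_sum] at h ⊢
    linarith
  funext k
  have := (Finset.sum_eq_zero_iff_of_nonneg fun j _ => sq_nonneg ‖u j - w j‖).1 hsum k
    (Finset.mem_univ k)
  simpa [sub_eq_zero] using this

theorem div_eq_div_and_eq_zero_of_kernel_eq {F F' : ι → ℂ} {z z' : ℂ} (hz : z ≠ 0)
    (hz' : z' ≠ 0) {s s' : ι → ℝ} {t : ℝ}
    (hdiag : ∑ k, ‖F k‖ ^ 2 = (∑ k, s k) * ‖z‖ ^ 2)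
    (hdiag' : ∑ k, ‖F' k‖ ^ 2 = (∑ k, s' k) * ‖z'‖ ^ 2)
    (hker : ∑ k, F k * conj (F' k) - Complex.I * (t : ℂ) * (z * conj z')
      = (1 / 2 : ℂ) * ∑ k, ((s k + s' k : ℝ) : ℂ) * (z * conj z')) :
    (fun k => F k / z) = (fun k => F' k / z') ∧ t = 0 := by
  have normalize : ∀ {G : ι → ℂ} {y : ℂ} {r : ι → ℝ}, y ≠ 0 →
      ∑ k, ‖G k‖ ^ 2 = (∑ k, r k) * ‖y‖ ^ 2 → ∑ k, ‖G k / y‖ ^ 2 = ∑ k, r k := by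
    intro G y r hy h
    simp_rw [norm_div, div_pow, ← Finset.sum_div, h]
    field_simp
  have hzz : z * conj z' ≠ 0 := mul_ne_zero hz ((map_ne_zero _).2 hz')
  have hinner : ∑ k, F k / z * conj (F' k / z')
      = (((∑ k, s k + ∑ k, s' k) / 2 : ℝ) : ℂ) + Complex.I * t := by
    rw [← mul_left_inj' hzz]
    simp_rw [map_div₀, div_mul_div_comm, ← Finset.sum_div, div_mul_cancel₀ _ hzz]
    rw [← Finset.sum_mul] at hker
    push_cast at hker ⊢
    rw [Finset.sum_add_distrib] at hker
    linear_combination hker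
  have hu : (fun k => F k / z) = (fun k => F' k / z') := by
    apply eq_of_two_mul_re_sum_mul_conj_eq
    rw [hinner, normalize hz hdiag, normalize hz' hdiag']
    simp only [Complex.add_re, Complex.ofReal_re, Complex.re_mul_ofReal, Complex.I_re]
    ring
  refine ⟨hu, ?_⟩
  have him := congrArg Complex.im hinner
  simp_rw [fun k => (congrFun hu k).symm] at him
  simp_rw [Complex.mul_conj, ← Complex.ofReal_sum] at him
  simpa using him.symm

end KernelAlgebra

theorem exists_ae_eq_const_of_ae_prod_eq {α β : Type*} [MeasurableSpace α] {μ : Measure α}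
    [SFinite μ] [NeZero μ] {g : α → β} (h : ∀ᵐ q ∂μ.prod μ, g q.1 = g q.2) :
    ∃ c, ∀ᵐ p ∂μ, g p = c := by
  obtain ⟨p₀, hp₀⟩ := (Measure.ae_ae_of_ae_prod h).exists
  exact ⟨g p₀, hp₀.mono fun _ hp => hp.symm⟩

theorem eq_zero_of_eventually_cos_inner_eq_one {V : Type*} [NormedAddCommGroup V]
    [InnerProductSpace ℝ V] {v : V}
    (h : ∀ᶠ ξ in 𝓝 (0 : V), Real.cos (2 * π * ⟪v, ξ⟫) = 1) : v = 0 := by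
  have hline : Tendsto (fun t : ℝ => t • v) (𝓝 0) (𝓝 0) := by
    simpa using (continuous_id.smul continuous_const).tendsto (0 : ℝ) (f := fun t : ℝ => t • v)
  have hsmall : ∀ᶠ t : ℝ in 𝓝 0, |2 * π * (t * ‖v‖ ^ 2)| < 2 * π := by
    have : Tendsto (fun t : ℝ => 2 * π * (t * ‖v‖ ^ 2)) (𝓝 0) (𝓝 0) := by
      simpa using (by fun_prop : Continuous fun t : ℝ => 2 * π * (t * ‖v‖ ^ 2)).tendsto 0
    filter_upwards [this (Metric.ball_mem_nhds 0 Real.two_pi_pos)] with t ht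
    simpa only [Set.mem_preimage, Metric.mem_ball, Real.dist_eq, sub_zero] using ht
  obtain ⟨t, ⟨hcos, hlt⟩, ht⟩ :=
    (((hline.eventually h).and hsmall).filter_mono nhdsWithin_le_nhds |>.and
      self_mem_nhdsWithin).exists (f := 𝓝[≠] (0 : ℝ))
  rw [real_inner_smul_right, real_inner_self_eq_norm_sq] at hcos
  rw [abs_lt] at hlt
  have := (Real.cos_eq_one_iff_of_lt_of_lt hlt.1 hlt.2).1 hcos
  simp only [mul_eq_zero, two_ne_zero, Real.pi_ne_zero, false_or] at this
  exact norm_eq_zero.1 (pow_eq_zero_iff two_ne_zero |>.1 (this.resolve_left ht))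

section Fourier

variable {V E : Type*} [NormedAddCommGroup V] [InnerProductSpace ℝ V] [FiniteDimensional ℝ V]
  [MeasurableSpace V] [BorelSpace V] [NormedAddCommGroup E] [NormedSpace ℂ E]
  {ι : Type*} [Fintype ι]

theorem Real.fourier_sum_smul_comp_sub {g : V → E} (hg : Integrable g) (w : ι → ℝ) (v : ι → V)
    (ξ : V) :
    𝓕 (fun x => ∑ j, w j • g (x - v j)) ξ = (∑ j, (w j : ℂ) * 𝐞 (-⟪v j, ξ⟫)) • 𝓕 g ξ := by
  have hshift : ∀ j, 𝓕 (fun x => g (x - v j)) ξ = 𝐞 (-⟪v j, ξ⟫) • 𝓕 g ξ := fun j => by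
    have := congrFun (VectorFourier.fourierIntegral_comp_add_right 𝐞 volume (innerₗ V) g (-v j)) ξ
    simp only [innerₗ_apply_apply, inner_neg_left, ← sub_eq_add_neg] at this
    exact this
  rw [Real.fourier_eq]
  simp_rw [Finset.smul_sum, smul_comm (𝐞 _) (w _)]
  rw [integral_finsetSum _ fun j _ => ?_, Finset.sum_smul]
  · refine Finset.sum_congr rfl fun j _ => ?_
    rw [integral_smul, ← Real.fourier_eq, hshift, Circle.smul_def, mul_smul, Complex.coe_smul]
  · exact ((Real.fourierIntegral_convergent_iff ξ).2 (hg.comp_sub_right (v j))).smul (w j)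

theorem eventually_sum_mul_fourierChar_eq_sum [CompleteSpace E] {g : V → E} (hg : Integrable g)
    (hg0 : ∫ x, g x ≠ 0) {w : ι → ℝ} {v : ι → V}
    (h : ∀ᵐ x, ∑ j, w j • g (x - v j) = (∑ j, w j) • g x) :
    ∀ᶠ ξ in 𝓝 0, ∑ j, (w j : ℂ) * 𝐞 (-⟪v j, ξ⟫) = ∑ j, (w j : ℂ) := by
  have hcont : Continuous (𝓕 g) :=
    VectorFourier.fourierIntegral_continuous Real.continuous_fourierChar
      (innerSL ℝ).continuous₂ hg
  have h0 : 𝓕 g 0 ≠ 0 := by simpa [Real.fourier_eq] using hg0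
  filter_upwards [hcont.continuousAt.eventually_ne h0] with ξ hξ
  have key : (∑ j, (w j : ℂ) * 𝐞 (-⟪v j, ξ⟫)) • 𝓕 g ξ = ((∑ j, w j : ℝ) : ℂ) • 𝓕 g ξ := by
    rw [← Real.fourier_sum_smul_comp_sub hg, Real.fourier_congr_ae h]
    simp_rw [← Complex.coe_smul]
    exact congrFun (VectorFourier.fourierIntegral_const_smul 𝐞 volume (innerₗ V) g _) ξ
  simpa using smul_left_injective ℂ hξ key

theorem eq_zero_of_sum_smul_comp_sub_eq [CompleteSpace E] {g : V → E} (hg : Integrable g)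
    (hg0 : ∫ x, g x ≠ 0) {w : ι → ℝ} (hw : ∀ j, 0 ≤ w j) {v : ι → V}
    (h : ∀ᵐ x, ∑ j, w j • g (x - v j) = (∑ j, w j) • g x) {k : ι} (hk : w k ≠ 0) :
    v k = 0 := by
  apply eq_zero_of_eventually_cos_inner_eq_one
  filter_upwards [eventually_sum_mul_fourierChar_eq_sum hg hg0 h] with ξ hξ
  have hre : ∑ j, w j * (1 - Real.cos (2 * π * ⟪v j, ξ⟫)) = 0 := by
    have hcos : ∀ j, (𝐞 (-⟪v j, ξ⟫) : ℂ).re = Real.cos (2 * π * ⟪v j, ξ⟫) := fun j => by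
      rw [Real.fourierChar_apply, Complex.exp_ofReal_mul_I_re, mul_neg, Real.cos_neg]
    have := congrArg Complex.re hξ
    simp only [Complex.re_sum, Complex.re_ofReal_mul, hcos, Complex.ofReal_re] at this
    simp_rw [mul_sub, mul_one, Finset.sum_sub_distrib, this, sub_self]
  have := (Finset.sum_eq_zero_iff_of_nonneg fun j _ =>
    mul_nonneg (hw j) (sub_nonneg.2 (Real.cos_le_one _))).1 hre k (Finset.mem_univ k)
  linarith [(mul_eq_zero.1 this).resolve_left hk]

end Fourier

section PureSteadyState

variable {E : Type*} [Add E] [MeasurableSpace E] {μ : Measure E} {ι : Type*} [Fintype ι]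
  {f : ι → E → ℂ} {f₀ : E → ℝ} {φ : E → ℂ} {v : ι → E}

theorem exists_const_of_pure_steady_state [SFinite μ] [NeZero μ] (hφ : ∀ᵐ p ∂μ, φ p ≠ 0)
    (hdiag : ∀ᵐ p ∂μ,
      ∑ k, ‖f k (p + v k) * φ (p + v k)‖ ^ 2 = (∑ k, ‖f k p‖ ^ 2) * ‖φ p‖ ^ 2)
    (hker : ∀ᵐ q ∂μ.prod μ,
      (∑ k, f k (q.1 + v k) * φ (q.1 + v k) * conj (f k (q.2 + v k) * φ (q.2 + v k)))
        - Complex.I * ((f₀ q.1 - f₀ q.2 : ℝ) : ℂ) * (φ q.1 * conj (φ q.2))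
        = (1 / 2 : ℂ) * ∑ k, ((‖f k q.1‖ ^ 2 + ‖f k q.2‖ ^ 2 : ℝ) : ℂ) * (φ q.1 * conj (φ q.2))) :
    ∃ (a : ι → ℂ) (c₀ : ℝ),
      (∀ᵐ p ∂μ, ∀ k, f k (p + v k) * φ (p + v k) = a k * φ p) ∧ ∀ᵐ p ∂μ, f₀ p = c₀ := by
  set g : E → (ι → ℂ) × ℝ := fun p => (fun k => f k (p + v k) * φ (p + v k) / φ p, f₀ p)
  have hpair : ∀ᵐ q ∂μ.prod μ, g q.1 = g q.2 := by
    have hfst := Measure.quasiMeasurePreserving_fst (μ := μ) (ν := μ)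
    have hsnd := Measure.quasiMeasurePreserving_snd (μ := μ) (ν := μ)
    filter_upwards [hker, hfst.ae hdiag, hsnd.ae hdiag, hfst.ae hφ, hsnd.ae hφ]
      with q hk hd hd' hz hz'
    obtain ⟨hu, ht⟩ := div_eq_div_and_eq_zero_of_kernel_eq hz hz' hd hd' hk
    exact Prod.ext hu (sub_eq_zero.1 ht)
  obtain ⟨⟨a, c₀⟩, hc⟩ := exists_ae_eq_const_of_ae_prod_eq hpair
  refine ⟨a, c₀, ?_, hc.mono fun _ hp => congrArg Prod.snd hp⟩
  filter_upwards [hc, hφ] with p hp hz k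
  exact (div_eq_iff hz).1 (congrFun (congrArg Prod.fst hp) k)

end PureSteadyState

section Translation

variable {G : Type*} [AddGroup G] [MeasurableSpace G] [MeasurableAdd G] {μ : Measure G}
  [μ.IsAddRightInvariant] {ι : Type*} [Countable ι] {f : ι → G → ℂ} {φ : G → ℂ} {v : ι → G}
  {a : ι → ℂ}

theorem ae_mul_eq_mul_comp_sub (hrel : ∀ᵐ p ∂μ, ∀ k, f k (p + v k) * φ (p + v k) = a k * φ p) :
    ∀ᵐ q ∂μ, ∀ k, f k q * φ q = a k * φ (q - v k) := by
  refine ae_all_iff.2 fun k => ?_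
  filter_upwards [(measurePreserving_sub_right μ (v k)).quasiMeasurePreserving.ae hrel]
    with q hq
  simpa using hq k

theorem ae_eq_const_of_ae_mul_eq_mul (hφ : ∀ᵐ p ∂μ, φ p ≠ 0)
    (hrel : ∀ᵐ p ∂μ, ∀ k, f k (p + v k) * φ (p + v k) = a k * φ p) (k : ι)
    (hv : a k ≠ 0 → v k = 0) : ∀ᵐ p ∂μ, f k p = a k := by
  filter_upwards [ae_mul_eq_mul_comp_sub hrel, hφ] with q hq hz
  by_cases hak : a k = 0
  · simpa [hak, hz] using hq k
  · simpa [hv hak, hz] using hq k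

end Translation

section Momentum

variable {V : Type*} [NormedAddCommGroup V] [InnerProductSpace ℝ V] [FiniteDimensional ℝ V]
  [MeasurableSpace V] [BorelSpace V] {ι : Type*} [Fintype ι] {f : ι → V → ℂ} {φ : V → ℂ}
  {v : ι → V} {a : ι → ℂ}

theorem shift_eq_zero_of_ae_mul_eq_mul (hφ₂ : MemLp φ 2) (hφ : ∀ᵐ p, φ p ≠ 0)
    (hdiag : ∀ᵐ p, ∑ k, ‖f k (p + v k) * φ (p + v k)‖ ^ 2 = (∑ k, ‖f k p‖ ^ 2) * ‖φ p‖ ^ 2)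
    (hrel : ∀ᵐ p, ∀ k, f k (p + v k) * φ (p + v k) = a k * φ p) {k : ι} (hk : a k ≠ 0) :
    v k = 0 := by
  have hS : ∀ᵐ p, ∑ j, ‖f j p‖ ^ 2 = ∑ j, ‖a j‖ ^ 2 := by
    filter_upwards [hdiag, hrel, hφ] with p hd hr hz
    simp_rw [hr, norm_mul, mul_pow, ← Finset.sum_mul] at hd
    exact (mul_left_inj' (pow_ne_zero 2 (norm_ne_zero_iff.2 hz))).1 hd.symm
  have hconv : ∀ᵐ q, ∑ j, ‖a j‖ ^ 2 • ((‖φ (q - v j)‖ ^ 2 : ℝ) : ℂ)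
      = (∑ j, ‖a j‖ ^ 2) • ((‖φ q‖ ^ 2 : ℝ) : ℂ) := by
    filter_upwards [ae_mul_eq_mul_comp_sub hrel, hS] with q hq hSq
    have : ∑ j, ‖a j‖ ^ 2 * ‖φ (q - v j)‖ ^ 2 = (∑ j, ‖a j‖ ^ 2) * ‖φ q‖ ^ 2 := by
      rw [← hSq, Finset.sum_mul]
      refine Finset.sum_congr rfl fun j _ => ?_
      rw [← mul_pow, ← norm_mul, ← hq j, norm_mul, mul_pow]
    simp_rw [Complex.real_smul]
    exact_mod_cast this
  have hint : Integrable fun q => ‖φ q‖ ^ 2 := (memLp_two_iff_integrable_sq_norm hφ₂.1).1 hφ₂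
  have hpos : ∫ q, ‖φ q‖ ^ 2 ≠ 0 := by
    intro h0
    obtain ⟨q, hq0, hq⟩ :=
      (((integral_eq_zero_iff_of_nonneg (fun _ => by positivity) hint).1 h0).and hφ).exists
    exact hq (norm_eq_zero.1 (pow_eq_zero_iff two_ne_zero |>.1 hq0))
  exact eq_zero_of_sum_smul_comp_sub_eq (g := fun q => ((‖φ q‖ ^ 2 : ℝ) : ℂ)) hint.ofReal
    (by rwa [integral_complex_ofReal, Complex.ofReal_ne_zero]) (fun j => by positivity) hconv
    (pow_ne_zero 2 (norm_ne_zero_iff.2 hk))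

end Momentum

theorem no_go_pure_steady_state_with_drift_general
    (N K : ℕ) (ℏ : ℝ) (hℏ : 0 < ℏ)
    (κ : Fin K → EuclideanSpace ℝ (Fin N))
    (f : Fin K → EuclideanSpace ℝ (Fin N) → ℂ)
    (f₀ : EuclideanSpace ℝ (Fin N) → ℝ)
    (φ : EuclideanSpace ℝ (Fin N) → ℂ)
    (hφ_L2 : MemLp φ 2 (volume : Measure (EuclideanSpace ℝ (Fin N))))
    (hφ_ne : ∀ᵐ p : EuclideanSpace ℝ (Fin N) ∂volume, φ p ≠ 0)
    (hdiag : ∀ᵐ p : EuclideanSpace ℝ (Fin N) ∂volume,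
      ∑ k : Fin K, ‖f k (p + ℏ • κ k) * φ (p + ℏ • κ k)‖ ^ 2
        = (∑ k : Fin K, ‖f k p‖ ^ 2) * ‖φ p‖ ^ 2)
    (hker : ∀ᵐ q : EuclideanSpace ℝ (Fin N) × EuclideanSpace ℝ (Fin N)
        ∂(volume.prod volume),
      (∑ k : Fin K, f k (q.1 + ℏ • κ k) * φ (q.1 + ℏ • κ k) *
          (starRingEnd ℂ) (f k (q.2 + ℏ • κ k) * φ (q.2 + ℏ • κ k)))
        - Complex.I * ((f₀ q.1 - f₀ q.2 : ℝ) : ℂ) * (φ q.1 * (starRingEnd ℂ) (φ q.2))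
        = (1 / 2 : ℂ) * ∑ k : Fin K,
            ((‖f k q.1‖ ^ 2 + ‖f k q.2‖ ^ 2 : ℝ) : ℂ) *
              (φ q.1 * (starRingEnd ℂ) (φ q.2))) :
    (∃ c₀ : ℝ, ∀ᵐ p : EuclideanSpace ℝ (Fin N) ∂volume, f₀ p = c₀) ∧
    (∀ k : Fin K, ∃ c : ℂ,
      (∀ᵐ p : EuclideanSpace ℝ (Fin N) ∂volume, f k p = c) ∧ (c ≠ 0 → κ k = 0)) := by
  obtain ⟨a, c₀, hrel, hf₀⟩ :=
    exists_const_of_pure_steady_state (v := fun k => ℏ • κ k) hφ_ne hdiag hker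
  have hκ : ∀ k, a k ≠ 0 → κ k = 0 := fun k hk =>
    (smul_eq_zero.1 (shift_eq_zero_of_ae_mul_eq_mul hφ_L2 hφ_ne hdiag hrel hk)).resolve_left hℏ.ne'
  exact ⟨⟨c₀, hf₀⟩, fun k => ⟨a k,
    ae_eq_const_of_ae_mul_eq_mul hφ_ne hrel k fun hk => by simp [hκ k hk], hκ k⟩⟩

/-- **No-go theorem with momentum drift** (Theorem 1 of the paper including the bounded
unitary drift term). In the momentum representation, let `φ ∈ L²(ℝ^N, ℂ)` be nonzero
almost everywhere. If the pure state `|φ⟩⟨φ|` is annihilated by the full translation-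
invariant relaxation superoperator, consisting of the dissipator `Σ_k D_{A(κ_k, f_k)}`
together with the generalized unitary drift `−i[f₀(p̂), ·]` with real `f₀` — expressed
through the diagonal condition (i) and the kernel identity (ii) — then `f₀` is a.e.
constant and every `f_k` is a.e. constant, a nonzero constant forcing `κ_k = 0`: both
the dissipator and the drift generator act trivially. -/
theorem no_go_pure_steady_state_with_drift
    (N K : ℕ) (hK : 1 ≤ K) (ℏ : ℝ) (hℏ : 0 < ℏ)
    (κ : Fin K → EuclideanSpace ℝ (Fin N))
    (f : Fin K → EuclideanSpace ℝ (Fin N) → ℂ)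
    (hf_meas : ∀ k, Measurable (f k))
    (f₀ : EuclideanSpace ℝ (Fin N) → ℝ) (hf₀_meas : Measurable f₀)
    (φ : EuclideanSpace ℝ (Fin N) → ℂ)
    (hφ_L2 : MemLp φ 2 (volume : Measure (EuclideanSpace ℝ (Fin N))))
    (hφ_ne : ∀ᵐ p : EuclideanSpace ℝ (Fin N) ∂volume, φ p ≠ 0)
    (hdiag : ∀ᵐ p : EuclideanSpace ℝ (Fin N) ∂volume,
      ∑ k : Fin K, ‖f k (p + ℏ • κ k) * φ (p + ℏ • κ k)‖ ^ 2
        = (∑ k : Fin K, ‖f k p‖ ^ 2) * ‖φ p‖ ^ 2)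
    (hker : ∀ᵐ q : EuclideanSpace ℝ (Fin N) × EuclideanSpace ℝ (Fin N)
        ∂(volume.prod volume),
      (∑ k : Fin K, f k (q.1 + ℏ • κ k) * φ (q.1 + ℏ • κ k) *
          (starRingEnd ℂ) (f k (q.2 + ℏ • κ k) * φ (q.2 + ℏ • κ k)))
        - Complex.I * ((f₀ q.1 - f₀ q.2 : ℝ) : ℂ) * (φ q.1 * (starRingEnd ℂ) (φ q.2))
        = (1 / 2 : ℂ) * ∑ k : Fin K,
            ((‖f k q.1‖ ^ 2 + ‖f k q.2‖ ^ 2 : ℝ) : ℂ) *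
              (φ q.1 * (starRingEnd ℂ) (φ q.2))) :
    (∃ c₀ : ℝ, ∀ᵐ p : EuclideanSpace ℝ (Fin N) ∂volume, f₀ p = c₀) ∧
    (∀ k : Fin K, ∃ c : ℂ,
      (∀ᵐ p : EuclideanSpace ℝ (Fin N) ∂volume, f k p = c) ∧ (c ≠ 0 → κ k = 0)) :=
  no_go_pure_steady_state_with_drift_general N K ℏ hℏ κ f f₀ φ hφ_L2 hφ_ne hdiag hker
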